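/- Let s ≥ 1 and let t : ℤ → ℝ be finitely supported. Assume the associated prolongation leaves all polynomials of degree at most s−1 invariant, in the sense that for every real polynomial q with deg q < s and every j ∈ ℤ one has Σ_{k∈ℤ} t_{j−2k}·q(k) = q(j/2) (q evaluated over the reals). Then the normalized symbol g(x) = (1/2)·Σ_{j∈ℤ} t_j·e^{−ijx} satisfies both g(x) = 1 + O(|x|^s) and g(x+π) = O(|x|^s) as x → 0; that is, the prolongation has low frequency order at least s and high frequency order at least s. -/

import Mathlib

/-!
Testing the reproduction identity at `j = 0` and `j = 1` against `q(x) = (j - 2x)^m` shows that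
the even and the odd part of the stencil both have the moments of a unit mass at `0` up to
order `s - 1`. Hence `Σ_j t_j j^m = 2·0^m` and `Σ_j (-1)^j t_j j^m = 0` for `m < s`. Since
`e^{-ij(x+π)} = (-1)^j e^{-ijx}`, both `2g(x)` and `2g(x+π)` are trigonometric sums
`Σ_j c_j e^{-ijx}` whose moments vanish below order `s` except the zeroth; replacing each
exponential by its Taylor polynomial of degree `< s` costs `O(|x|^s)`, and the moment conditions
collapse the sum of these Taylor polynomials to the zeroth moment.
-/

open Filter Topology Asymptotics Polynomial Complex

def ReproducesPolynomials (t : ℤ → ℝ) (s : ℕ) : Prop :=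
  ∀ q : ℝ[X], q.degree < (s : WithBot ℕ) → ∀ j : ℤ,
    ∑ᶠ k : ℤ, t (j - 2 * k) * q.eval (k : ℝ) = q.eval ((j : ℝ) / 2)

theorem finsum_int_eq_add_parity {M : Type*} [AddCommMonoid M] {F : ℤ → M}
    (hF : (Function.support F).Finite) :
    ∑ᶠ j, F j = ∑ᶠ k, F (0 - 2 * k) + ∑ᶠ k, F (1 - 2 * k) := by
  have hcover : Set.range (fun k : ℤ => 0 - 2 * k) ∪ Set.range (fun k : ℤ => 1 - 2 * k) =
      Set.univ := by
    refine Set.eq_univ_of_forall fun j => ?_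
    rcases Int.even_or_odd' j with ⟨k, rfl | rfl⟩
    · exact Or.inl ⟨-k, by ring⟩
    · exact Or.inr ⟨-k, by ring⟩
  have hdisj : Disjoint (Set.range (fun k : ℤ => 0 - 2 * k))
      (Set.range (fun k : ℤ => 1 - 2 * k)) := by
    refine Set.disjoint_left.2 ?_
    rintro _ ⟨k, rfl⟩ ⟨l, hl⟩
    dsimp only at hl
    omega
  rw [← finsum_mem_univ, ← hcover, finsum_mem_union' hdisj (hF.inter_of_right _)
      (hF.inter_of_right _), finsum_mem_range (fun a b h => by omega),
    finsum_mem_range (fun a b h => by omega)]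

namespace ReproducesPolynomials

variable {t : ℤ → ℝ} {s m : ℕ}

theorem finsum_coset_mul_pow (h : ReproducesPolynomials t s) (hm : m < s) (j : ℤ) :
    ∑ᶠ k : ℤ, t (j - 2 * k) * ((j - 2 * k : ℤ) : ℝ) ^ m = 0 ^ m := by
  have hdeg : ((C (j : ℝ) - C 2 * X) ^ m).degree < (s : WithBot ℕ) := by
    refine lt_of_le_of_lt ?_ (WithBot.coe_lt_coe.2 hm)
    compute_degree
  have := h _ hdeg j
  simp only [eval_pow, eval_sub, eval_mul, eval_C, eval_X] at this
  rw [mul_div_cancel₀ _ two_ne_zero, sub_self] at this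
  rw [← this]
  push_cast
  rfl

theorem finsum_mul_pow (h : ReproducesPolynomials t s) (ht : (Function.support t).Finite)
    (hm : m < s) : ∑ᶠ j : ℤ, t j * (j : ℝ) ^ m = 2 * 0 ^ m := by
  rw [finsum_int_eq_add_parity (ht.subset (Function.support_mul_subset_left _ _)),
    h.finsum_coset_mul_pow hm, h.finsum_coset_mul_pow hm, two_mul]

theorem finsum_neg_one_zpow_mul_pow (h : ReproducesPolynomials t s)
    (ht : (Function.support t).Finite) (hm : m < s) :
    ∑ᶠ j : ℤ, (-1 : ℝ) ^ j * t j * (j : ℝ) ^ m = 0 := by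
  have hsupp : (Function.support fun j : ℤ => (-1 : ℝ) ^ j * t j * (j : ℝ) ^ m).Finite :=
    ht.subset fun j hj => by simp_all
  have heven (k : ℤ) : (-1 : ℝ) ^ (0 - 2 * k) = 1 := Even.neg_one_zpow ⟨-k, by ring⟩
  have hodd (k : ℤ) : (-1 : ℝ) ^ (1 - 2 * k) = -1 := Odd.neg_one_zpow ⟨-k, by ring⟩
  simp only [finsum_int_eq_add_parity hsupp, heven, hodd, one_mul, neg_mul,
    finsum_neg_distrib, h.finsum_coset_mul_pow hm, add_neg_cancel]

end ReproducesPolynomials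

theorem Complex.exp_sub_sum_range_isBigO (n : ℕ) :
    (fun z : ℂ => exp z - ∑ m ∈ Finset.range n, z ^ m / m.factorial) =O[𝓝 0]
      fun z => ‖z‖ ^ n := by
  have := (NormedSpace.exp_hasFPowerSeriesAt_zero (𝕂 := ℂ) (𝔸 := ℂ)).isBigO_sub_partialSum_pow n
  simp only [FormalMultilinearSeries.partialSum, NormedSpace.expSeries_apply_eq, zero_add,
    ← Complex.exp_eq_exp_ℂ, smul_eq_mul] at this
  simpa [div_eq_inv_mul] using this

theorem exp_neg_I_mul_sub_sum_range_isBigO (a : ℂ) (n : ℕ) :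
    (fun x : ℝ => exp (-(I * a * x)) - ∑ m ∈ Finset.range n, (-(I * a * x)) ^ m / m.factorial)
      =O[𝓝 0] fun x => |x| ^ n := by
  have hlim : Tendsto (fun x : ℝ => -(I * a * x)) (𝓝 0) (𝓝 0) := by
    simpa using (by fun_prop : Continuous fun x : ℝ => -(I * a * x)).tendsto 0
  refine (Complex.exp_sub_sum_range_isBigO n |>.comp_tendsto hlim).trans ?_
  refine (isBigO_const_mul_self (‖a‖ ^ n) (fun x : ℝ => |x| ^ n) _).congr_left fun x => ?_
  simp [mul_pow]

theorem exp_neg_I_mul_add_pi (j : ℤ) (x : ℝ) :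
    exp (-(I * j * ((x + Real.pi : ℝ) : ℂ))) = ((-1 : ℝ) ^ j : ℝ) * exp (-(I * j * x)) := by
  have : -(I * j * ((x + Real.pi : ℝ) : ℂ)) = (-j : ℤ) * (Real.pi * I) + -(I * j * x) := by
    push_cast; ring
  rw [this, exp_add, exp_int_mul, exp_pi_mul_I, ofReal_zpow, ofReal_neg, ofReal_one, zpow_neg,
    ← inv_zpow, inv_neg, inv_one]

theorem sum_mul_sum_range_taylor_eq_of_moments {S : Finset ℤ} {c : ℤ → ℂ} {a : ℂ} {n : ℕ}
    (hn : 0 < n) (hmom : ∀ m < n, ∑ j ∈ S, c j * (j : ℂ) ^ m = a * 0 ^ m) (x : ℝ) :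
    ∑ j ∈ S, c j * ∑ m ∈ Finset.range n, (-(I * j * x)) ^ m / m.factorial = a :=
  calc ∑ j ∈ S, c j * ∑ m ∈ Finset.range n, (-(I * j * x)) ^ m / m.factorial
      = ∑ m ∈ Finset.range n, (∑ j ∈ S, c j * (j : ℂ) ^ m) * ((-(I * x)) ^ m / m.factorial) := by
        simp only [Finset.mul_sum, Finset.sum_mul]
        rw [Finset.sum_comm]
        refine Finset.sum_congr rfl fun m _ => Finset.sum_congr rfl fun j _ => ?_
        rw [show -(I * j * x) = j * -(I * x) by ring, mul_pow]
        ring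
    _ = ∑ m ∈ Finset.range n, a * 0 ^ m * ((-(I * x)) ^ m / m.factorial) :=
        Finset.sum_congr rfl fun m hm => by rw [hmom m (Finset.mem_range.1 hm)]
    _ = a := by
        rw [Finset.sum_eq_single_of_mem 0 (Finset.mem_range.2 hn) fun m _ hm => by simp [hm]]
        simp

theorem finsum_mul_exp_sub_isBigO {c : ℤ → ℝ} (hc : (Function.support c).Finite) (a : ℝ)
    {n : ℕ} (hn : 0 < n) (hmom : ∀ m < n, ∑ᶠ j : ℤ, c j * (j : ℝ) ^ m = a * 0 ^ m) :
    (fun x : ℝ => ∑ᶠ j : ℤ, (c j : ℂ) * exp (-(I * j * x)) - a) =O[𝓝 0] fun x => |x| ^ n := by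
  set S := hc.toFinset
  have hsupp {f : ℤ → ℂ} : Function.support (fun j => (c j : ℂ) * f j) ⊆ S := fun j hj => by
    simp_all [S]
  have hmomS : ∀ m < n, ∑ j ∈ S, (c j : ℂ) * (j : ℂ) ^ m = a * 0 ^ m := fun m hm => by
    have hreal := hmom m hm
    rw [finsum_eq_sum_of_support_subset (s := S) _ fun j hj => by simp_all [S]] at hreal
    exact_mod_cast hreal
  have hremainder : (fun x : ℝ => ∑ j ∈ S, (c j : ℂ) * (exp (-(I * j * x)) -
      ∑ m ∈ Finset.range n, (-(I * j * x)) ^ m / m.factorial)) =O[𝓝 0] fun x => |x| ^ n := by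
    simpa only [Finset.sum_fn] using
      IsBigO.sum (s := S) fun j _ => (exp_neg_I_mul_sub_sum_range_isBigO j n).const_mul_left _
  refine hremainder.congr_left fun x => ?_
  simp only [mul_sub, Finset.sum_sub_distrib, sum_mul_sum_range_taylor_eq_of_moments hn hmomS,
    finsum_eq_sum_of_support_subset _ hsupp]

/-- If the prolongation with finitely supported stencil `t` leaves all
polynomials of degree `< s` invariant (`Σ_k t_{j−2k} q(k) = q(j/2)` for all
`j`), then its normalized symbol `g(x) = (1/2)Σ_j t_j e^{−ijx}` satisfies both
`g(x) = 1 + O(|x|^s)` and `g(x+π) = O(|x|^s)` as `x → 0`; that is, the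
prolongation has low and high frequency orders at least `s`. -/
theorem prolongation_polynomial_invariance_LF_HF (s : ℕ) (hs : 1 ≤ s)
    (t : ℤ → ℝ) (ht : (Function.support t).Finite)
    (hpoly : ∀ q : Polynomial ℝ, q.degree < (s : WithBot ℕ) → ∀ j : ℤ,
      ∑ᶠ k : ℤ, t (j - 2 * k) * q.eval (k : ℝ) = q.eval ((j : ℝ) / 2))
    (g : ℝ → ℂ)
    (hg : ∀ x : ℝ, g x =
      (1 / 2) * ∑ᶠ j : ℤ, (t j : ℂ) * Complex.exp (-(Complex.I * j * x))) :
    ((fun x : ℝ => g x - 1) =O[𝓝[≠] (0 : ℝ)] fun x : ℝ => |x| ^ s) ∧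
    ((fun x : ℝ => g (x + Real.pi)) =O[𝓝[≠] (0 : ℝ)] fun x : ℝ => |x| ^ s) := by
  have hLF := finsum_mul_exp_sub_isBigO ht 2 hs fun m hm =>
    ReproducesPolynomials.finsum_mul_pow hpoly ht hm
  have hHF := finsum_mul_exp_sub_isBigO (c := fun j => (-1 : ℝ) ^ j * t j)
    (ht.subset fun j hj => by simp_all) 0 hs fun m hm => by
      simpa using ReproducesPolynomials.finsum_neg_one_zpow_mul_pow hpoly ht hm
  refine ⟨(hLF.const_mul_left (1 / 2)).mono nhdsWithin_le_nhds |>.congr_left fun x => ?_,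
    (hHF.const_mul_left (1 / 2)).mono nhdsWithin_le_nhds |>.congr_left fun x => ?_⟩
  · rw [hg]
    push_cast
    ring
  · simp only [hg, exp_neg_I_mul_add_pi]
    push_cast
    simp only [sub_zero, mul_left_comm, mul_assoc]
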